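/- arXiv:1205.3006 — 5 statements merged into one kernel-verified Lean document; each statement's English description precedes it below -/
import Mathlib

section
/- Let z > 0 and q₀, q₊, q₋ ∈ ℝ, and let q̂ : ℝ → ℝ be the piecewise linear kernel q̂(ξ) = q₀ + q₊ξ for ξ ≥ 0 and q̂(ξ) = q₀ + q₋ξ for ξ < 0. Let h : [−z, z] → ℝ be continuous. Then the function F(ξ) = ∫_{−z}^{z} h(s) q̂(ξ − s) ds is twice differentiable at every ξ ∈ (−z, z), with F''(ξ) = (q₊ − q₋) h(ξ). -/
/-!
Since `q̂(ξ) = q₀ + q₋ ξ + (q₊ - q₋) max ξ 0`, the function `F` is an affine function plus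
`(q₊ - q₋)` times the ramp convolution `R(ξ) = ∫_{-z}^{z} h(s) max (ξ - s) 0 ds`. For
`ξ ∈ [-z, z]` the ramp vanishes on `[ξ, z]`, so `R(ξ) = ξ ∫_{-z}^{ξ} h - ∫_{-z}^{ξ} s h(s) ds`;
by the fundamental theorem of calculus `R' (ξ) = ∫_{-z}^{ξ} h` and `R'' (ξ) = h(ξ)`.
-/

open Set intervalIntegral MeasureTheory Filter Topology

lemma ite_pwlinear_eq_add_max (q₀ qp qm y : ℝ) :
    (if 0 ≤ y then q₀ + qp * y else q₀ + qm * y) = q₀ + qm * y + (qp - qm) * max y 0 := by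
  split_ifs with hy
  · rw [max_eq_left hy]; ring
  · rw [max_eq_right (not_le.1 hy).le]; ring

section

variable {h : ℝ → ℝ} {a b x : ℝ}

lemma hasDerivAt_integral_of_continuousOn_Icc (hh : ContinuousOn h (Icc a b)) (hx : x ∈ Ioo a b) :
    HasDerivAt (fun u => ∫ s in a..u, h s) (h x) x :=
  integral_hasDerivAt_right
    ((hh.mono (Icc_subset_Icc_right hx.2.le)).intervalIntegrable_of_Icc hx.1.le)
    ((hh.mono Ioo_subset_Icc_self).stronglyMeasurableAtFilter isOpen_Ioo x hx)
    (hh.continuousAt (Icc_mem_nhds hx.1 hx.2))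

lemma integral_mul_max_sub_eq (hh : IntervalIntegrable h volume a b) (hx : x ∈ Icc a b) :
    ∫ s in a..b, h s * max (x - s) 0 = x * (∫ s in a..x, h s) - ∫ s in a..x, s * h s := by
  have hax : IntervalIntegrable h volume a x := hh.mono_set (by
    rw [uIcc_of_le hx.1, uIcc_of_le (hx.1.trans hx.2)]; exact Icc_subset_Icc_right hx.2)
  have hxb : IntervalIntegrable h volume x b := hh.mono_set (by
    rw [uIcc_of_le hx.2, uIcc_of_le (hx.1.trans hx.2)]; exact Icc_subset_Icc_left hx.1)
  have hramp : Continuous fun s : ℝ => max (x - s) 0 := by fun_prop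
  have hleft : ∫ s in a..x, h s * max (x - s) 0 = ∫ s in a..x, (x * h s - s * h s) :=
    integral_congr fun s hs => by
      rw [uIcc_of_le hx.1] at hs
      rw [max_eq_left (sub_nonneg.2 hs.2)]; ring
  have hright : ∫ s in x..b, h s * max (x - s) 0 = 0 := by
    rw [integral_congr (g := fun _ => 0) fun s hs => ?_, intervalIntegral.integral_zero]
    rw [uIcc_of_le hx.2] at hs
    simp [max_eq_right (sub_nonpos.2 hs.1)]
  rw [← integral_add_adjacent_intervals (hax.mul_continuousOn hramp.continuousOn)
      (hxb.mul_continuousOn hramp.continuousOn), hleft, hright, add_zero,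
    integral_sub (hax.const_mul x) (hax.continuousOn_mul (continuousOn_id' _)),
    intervalIntegral.integral_const_mul]

lemma integral_mul_pwlinear_eq (hh : IntervalIntegrable h volume a b) (q₀ qp qm x : ℝ) :
    ∫ s in a..b, h s * (if 0 ≤ x - s then q₀ + qp * (x - s) else q₀ + qm * (x - s)) =
      (∫ s in a..b, h s * (q₀ - qm * s)) + qm * (∫ s in a..b, h s) * x +
        (qp - qm) * ∫ s in a..b, h s * max (x - s) 0 := by
  simp_rw [ite_pwlinear_eq_add_max]
  have hsplit : ∀ s, h s * (q₀ + qm * (x - s) + (qp - qm) * max (x - s) 0) =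
      h s * (q₀ - qm * s) + (qm * x) * h s + (qp - qm) * (h s * max (x - s) 0) :=
    fun s => by ring
  simp_rw [hsplit]
  rw [integral_add ((hh.mul_continuousOn (by fun_prop)).add (hh.const_mul _))
      ((hh.mul_continuousOn (by fun_prop)).const_mul _),
    integral_add (hh.mul_continuousOn (by fun_prop)) (hh.const_mul _),
    intervalIntegral.integral_const_mul, intervalIntegral.integral_const_mul]
  ring

lemma hasDerivAt_integral_mul_max_sub (hh : ContinuousOn h (Icc a b)) (hx : x ∈ Ioo a b) :
    HasDerivAt (fun y => ∫ s in a..b, h s * max (y - s) 0) (∫ s in a..x, h s) x := by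
  have hint : IntervalIntegrable h volume a b := hh.intervalIntegrable_of_Icc (hx.1.trans hx.2).le
  have hA := hasDerivAt_integral_of_continuousOn_Icc hh hx
  have hB : HasDerivAt (fun u => ∫ s in a..u, s * h s) (x * h x) x :=
    hasDerivAt_integral_of_continuousOn_Icc ((continuousOn_id' _).mul hh) hx
  have heq : (fun y => y * (∫ s in a..y, h s) - ∫ s in a..y, s * h s) =ᶠ[𝓝 x]
      fun y => ∫ s in a..b, h s * max (y - s) 0 :=
    eventually_of_mem (Icc_mem_nhds hx.1 hx.2) fun y hy => (integral_mul_max_sub_eq hint hy).symm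
  refine (((hasDerivAt_id x).mul hA).sub hB).congr_of_eventuallyEq heq.symm |>.congr_deriv ?_
  simp only [id_eq, one_mul]
  ring

end

theorem convolution_pwlinear_kernel_second_deriv_general
    (z q₀ qp qm : ℝ)
    (qhat : ℝ → ℝ)
    (hqhat : ∀ ξ : ℝ, qhat ξ = if 0 ≤ ξ then q₀ + qp * ξ else q₀ + qm * ξ)
    (h : ℝ → ℝ) (hcont : ContinuousOn h (Icc (-z) z))
    (F : ℝ → ℝ)
    (hF : F = fun ξ : ℝ => ∫ s in (-z)..z, h s * qhat (ξ - s)) :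
    ∀ ξ ∈ Ioo (-z) z,
      DifferentiableAt ℝ F ξ ∧ DifferentiableAt ℝ (deriv F) ξ ∧
        deriv (deriv F) ξ = (qp - qm) * h ξ := by
  intro ξ hξ
  have hint : IntervalIntegrable h volume (-z) z :=
    hcont.intervalIntegrable_of_Icc (hξ.1.trans hξ.2).le
  set α := ∫ s in (-z)..z, h s * (q₀ - qm * s)
  set β := qm * ∫ s in (-z)..z, h s
  have hFR : F = fun y => α + β * y + (qp - qm) * ∫ s in (-z)..z, h s * max (y - s) 0 := by
    funext y
    simp_rw [hF, hqhat]
    exact integral_mul_pwlinear_eq hint q₀ qp qm y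
  have hF' : ∀ y ∈ Ioo (-z) z,
      HasDerivAt F (β + (qp - qm) * ∫ s in (-z)..y, h s) y := fun y hy => by
    rw [hFR]
    exact ((((hasDerivAt_id y).const_mul β).const_add α).add
      ((hasDerivAt_integral_mul_max_sub hcont hy).const_mul (qp - qm))).congr_deriv (by ring)
  have hderivF : deriv F =ᶠ[𝓝 ξ] fun y => β + (qp - qm) * ∫ s in (-z)..y, h s :=
    eventually_of_mem (isOpen_Ioo.mem_nhds hξ) fun y hy => (hF' y hy).deriv
  have hF'' : HasDerivAt (deriv F) ((qp - qm) * h ξ) ξ :=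
    (((hasDerivAt_integral_of_continuousOn_Icc hcont hξ).const_mul (qp - qm)).const_add β
      ).congr_of_eventuallyEq hderivF
  exact ⟨(hF' ξ hξ).differentiableAt, hF''.differentiableAt, hF''.deriv⟩

/-- For the piecewise linear kernel `q̂` and a continuous shape function `h` on
`[−z,z]`, the convolution `F(ξ) = ∫_{−z}^{z} h(s) q̂(ξ−s) ds` is twice
differentiable on `(−z,z)` with `F''(ξ) = (q₊ − q₋) h(ξ)`. -/
theorem convolution_pwlinear_kernel_second_deriv
    (z q₀ qp qm : ℝ) (hz : 0 < z)
    (qhat : ℝ → ℝ)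
    (hqhat : ∀ ξ : ℝ, qhat ξ = if 0 ≤ ξ then q₀ + qp * ξ else q₀ + qm * ξ)
    (h : ℝ → ℝ) (hcont : ContinuousOn h (Icc (-z) z))
    (F : ℝ → ℝ)
    (hF : F = fun ξ : ℝ => ∫ s in (-z)..z, h s * qhat (ξ - s)) :
    ∀ ξ ∈ Ioo (-z) z,
      DifferentiableAt ℝ F ξ ∧ DifferentiableAt ℝ (deriv F) ξ ∧
        deriv (deriv F) ξ = (qp - qm) * h ξ :=
  convolution_pwlinear_kernel_second_deriv_general z q₀ qp qm qhat hqhat h hcont F hF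
end

section
/- Let z > 0 and q₊, q₋ ∈ ℝ with q₊ ≠ q₋, and for a > 0 define h_a(ξ) = [q₋ cosh((ξ−z)/a) − q₊ cosh((ξ+z)/a)] / [a (q₋ − q₊) sinh(2z/a)]. Then for every continuous function φ : ℝ → ℝ, lim_{a→0+} ∫_{−z}^{z} h_a(ξ) φ(ξ) dξ = [q₋ φ(−z) − q₊ φ(z)] / (q₋ − q₊). That is, h_a converges in the sense of distributions to q₋/(q₋−q₊) · δ(ξ+z) − q₊/(q₋−q₊) · δ(ξ−z) as a → 0+. -/
/-!
With `K_a(ξ) = cosh((ξ + z)/a) / (a sinh(2z/a))` one has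
`h_a(ξ) = (q₋ K_a(-ξ) - q₊ K_a(ξ)) / (q₋ - q₊)`.
On `[-z, z]` the kernel `K_a` is nonnegative with unit mass, and at distance `ε` from `z` it is
`O(a⁻¹ e^{-ε/a})`; so it is an approximate identity at `z` (the peak-function theorem), and
`ξ ↦ K_a(-ξ)` one at `-z`.
-/

open Set Filter intervalIntegral

open Real Topology

lemma tendsto_inv_mul_exp_neg_div_nhdsGT_zero {ε : ℝ} (hε : 0 < ε) :
    Tendsto (fun a : ℝ => a⁻¹ * exp (-ε / a)) (𝓝[>] 0) (𝓝 0) := by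
  have h := ((tendsto_pow_mul_exp_neg_atTop_nhds_zero 1).comp
    (tendsto_inv_nhdsGT_zero.const_mul_atTop hε)).const_mul ε⁻¹
  rw [mul_zero] at h
  refine h.congr fun a => ?_
  simp only [Function.comp_apply, pow_one]
  field_simp

lemma cosh_le_exp_of_nonneg {x : ℝ} (hx : 0 ≤ x) : cosh x ≤ exp x := by
  rw [← cosh_add_sinh]
  linarith [sinh_nonneg_iff.2 hx]

lemma exp_div_four_le_sinh {y : ℝ} (hy : 1 ≤ y) : exp y / 4 ≤ sinh y := by
  have h1 : exp (-y) ≤ 1 := exp_le_one_iff.2 (by linarith)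
  have h2 : 2 ≤ exp y := by linarith [add_one_le_exp y]
  rw [sinh_eq]
  linarith

lemma tendsto_cosh_div_div_mul_sinh_div_nhdsGT_zero {s t : ℝ} (hs : 0 ≤ s) (hst : s < t) :
    Tendsto (fun a : ℝ => cosh (s / a) / (a * sinh (t / a))) (𝓝[>] 0) (𝓝 0) := by
  have hbound := (tendsto_inv_mul_exp_neg_div_nhdsGT_zero (sub_pos.2 hst)).const_mul 4
  rw [mul_zero] at hbound
  refine squeeze_zero' ?_ ?_ hbound
  · filter_upwards [self_mem_nhdsWithin] with a (ha : 0 < a)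
    have : 0 < sinh (t / a) := sinh_pos_iff.2 (div_pos (hs.trans_lt hst) ha)
    positivity
  · filter_upwards [Ioc_mem_nhdsGT (hs.trans_lt hst)] with a ⟨ha, hat⟩
    have hsinh := exp_div_four_le_sinh ((one_le_div ha).2 hat)
    calc cosh (s / a) / (a * sinh (t / a))
        ≤ exp (s / a) / (a * (exp (t / a) / 4)) := by
          gcongr
          exact cosh_le_exp_of_nonneg (div_nonneg hs ha.le)
      _ = 4 * (a⁻¹ * exp (-(t - s) / a)) := by
          rw [show -(t - s) / a = s / a - t / a by ring, exp_sub]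
          field_simp

noncomputable def coshKernel (b c a x : ℝ) : ℝ := cosh ((x - b) / a) / (a * sinh ((c - b) / a))

section coshKernel

variable {b c a : ℝ}

lemma continuous_coshKernel : Continuous (coshKernel b c a) := by
  unfold coshKernel
  fun_prop

lemma coshKernel_nonneg (hbc : b < c) (ha : 0 < a) (x : ℝ) : 0 ≤ coshKernel b c a x := by
  have : 0 < sinh ((c - b) / a) := sinh_pos_iff.2 (div_pos (sub_pos.2 hbc) ha)
  unfold coshKernel
  positivity

lemma monotoneOn_coshKernel (hbc : b < c) (ha : 0 < a) : MonotoneOn (coshKernel b c a) (Ici b) := by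
  intro x hx y hy hxy
  have : 0 < sinh ((c - b) / a) := sinh_pos_iff.2 (div_pos (sub_pos.2 hbc) ha)
  unfold coshKernel
  gcongr
  rw [cosh_le_cosh, abs_of_nonneg (div_nonneg (sub_nonneg.2 hx) ha.le),
    abs_of_nonneg (div_nonneg (sub_nonneg.2 hy) ha.le)]
  gcongr

lemma integral_coshKernel (hbc : b ≠ c) (ha : a ≠ 0) :
    ∫ x in b..c, coshKernel b c a x = 1 := by
  have hderiv : ∀ x ∈ uIcc b c,
      HasDerivAt (fun x => a * sinh ((x - b) / a)) (cosh ((x - b) / a)) x := by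
    intro x _
    exact ((((hasDerivAt_id x).sub_const b).div_const a).sinh.const_mul a).congr_deriv
      (by rw [id]; field_simp)
  have hsinh : sinh ((c - b) / a) ≠ 0 := by
    simpa [sinh_eq_zero, sub_eq_zero, ha] using hbc.symm
  simp only [coshKernel, intervalIntegral.integral_div]
  rw [integral_eq_sub_of_hasDerivAt hderiv ?_, sub_self, zero_div, sinh_zero, mul_zero, sub_zero,
    div_self (mul_ne_zero ha hsinh)]
  exact (by fun_prop : Continuous fun x => cosh ((x - b) / a)).intervalIntegrable _ _

lemma tendsto_coshKernel_nhdsGT_zero {x : ℝ} (hbx : b ≤ x) (hxc : x < c) :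
    Tendsto (fun a => coshKernel b c a x) (𝓝[>] 0) (𝓝 0) :=
  tendsto_cosh_div_div_mul_sinh_div_nhdsGT_zero (sub_nonneg.2 hbx) (sub_lt_sub_right hxc b)

/-- Away from `c` the kernel is dominated by its value at a single point `x₀ < c`,
where it tends to `0`. -/
lemma tendstoUniformlyOn_coshKernel (hbc : b < c) {u : Set ℝ} (hu : IsOpen u) (hcu : c ∈ u) :
    TendstoUniformlyOn (coshKernel b c) 0 (𝓝[>] 0) (Icc b c \ u) := by
  obtain ⟨ε, hε, hball⟩ := Metric.isOpen_iff.1 hu c hcu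
  set x₀ := max b (c - ε)
  have hx₀ : x₀ < c := max_lt hbc (by linarith)
  have hlim := tendsto_coshKernel_nhdsGT_zero (le_max_left b (c - ε)) hx₀
  rw [Metric.tendstoUniformlyOn_iff]
  intro δ hδ
  filter_upwards [self_mem_nhdsWithin, (tendsto_order.1 hlim).2 δ hδ]
    with a (ha : 0 < a) hδa x ⟨⟨hbx, hxc⟩, hxu⟩
  have hxx₀ : x ≤ x₀ := by
    refine le_max_of_le_right ?_
    by_contra! h
    exact hxu (hball (by rw [Metric.mem_ball, Real.dist_eq, abs_lt]; constructor <;> linarith))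
  rw [Pi.zero_apply, Real.dist_eq, zero_sub, abs_neg, abs_of_nonneg (coshKernel_nonneg hbc ha x)]
  exact (monotoneOn_coshKernel hbc ha hbx (mem_Ici.2 (le_max_left _ _)) hxx₀).trans_lt hδa

lemma tendsto_integral_coshKernel_mul (hbc : b < c) {ψ : ℝ → ℝ}
    (hψ : ContinuousOn ψ (Icc b c)) :
    Tendsto (fun a => ∫ x in b..c, coshKernel b c a x * ψ x) (𝓝[>] 0) (𝓝 (ψ c)) := by
  have hIcc (f : ℝ → ℝ) : ∫ x in Icc b c, f x = ∫ x in b..c, f x := by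
    rw [MeasureTheory.integral_Icc_eq_integral_Ioc, integral_of_le hbc.le]
  have hmass : Tendsto (fun a => ∫ x in Icc b c, coshKernel b c a x) (𝓝[>] 0) (𝓝 1) := by
    refine tendsto_const_nhds.congr' ?_
    filter_upwards [self_mem_nhdsWithin] with a (ha : 0 < a)
    rw [hIcc, integral_coshKernel hbc.ne ha.ne']
  have hnonneg : ∀ᶠ a in 𝓝[>] 0, ∀ x ∈ Icc b c, 0 ≤ coshKernel b c a x := by
    filter_upwards [self_mem_nhdsWithin] with a (ha : 0 < a) x _
    exact coshKernel_nonneg hbc ha x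
  have := tendsto_setIntegral_peak_smul_of_integrableOn_of_tendsto measurableSet_Icc
    measurableSet_Icc subset_rfl self_mem_nhdsWithin measure_Icc_lt_top.ne hnonneg
    (fun u hu hcu => tendstoUniformlyOn_coshKernel hbc hu hcu) hmass
    (Eventually.of_forall fun a => continuous_coshKernel.aestronglyMeasurable)
    hψ.integrableOn_Icc (hψ c (right_mem_Icc.2 hbc.le))
  simpa only [hIcc, smul_eq_mul] using this

lemma tendsto_integral_coshKernel_neg_mul (hbc : b < c) {ψ : ℝ → ℝ}
    (hψ : ContinuousOn ψ (Icc (-c) (-b))) :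
    Tendsto (fun a => ∫ x in (-c)..(-b), coshKernel b c a (-x) * ψ x) (𝓝[>] 0)
      (𝓝 (ψ (-c))) := by
  have hψneg : ContinuousOn (fun x => ψ (-x)) (Icc b c) :=
    hψ.comp continuousOn_neg fun x ⟨hbx, hxc⟩ => ⟨neg_le_neg hxc, neg_le_neg hbx⟩
  refine (tendsto_integral_coshKernel_mul hbc hψneg).congr fun a => ?_
  simpa only [neg_neg] using
    integral_comp_neg (a := b) (b := c) fun x => coshKernel b c a (-x) * ψ x

end coshKernel

noncomputable def shapeFunction (z qp qm a ξ : ℝ) : ℝ :=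
  (qm * cosh ((ξ - z) / a) - qp * cosh ((ξ + z) / a)) / (a * (qm - qp) * sinh (2 * z / a))

lemma shapeFunction_eq (z qp qm a ξ : ℝ) :
    shapeFunction z qp qm a ξ =
      qm / (qm - qp) * coshKernel (-z) z a (-ξ) - qp / (qm - qp) * coshKernel (-z) z a ξ := by
  rw [shapeFunction, coshKernel, coshKernel, show (-ξ - -z) / a = -((ξ - z) / a) by ring,
    cosh_neg, sub_neg_eq_add, sub_neg_eq_add, ← two_mul]
  simp only [div_eq_mul_inv, mul_inv]
  ring

theorem regularized_shape_function_delta_limit_general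
    (z qp qm : ℝ) (hz : 0 < z)
    (φ : ℝ → ℝ) (hφ : Continuous φ) :
    Tendsto
      (fun a : ℝ => ∫ ξ in (-z)..z,
        ((qm * Real.cosh ((ξ - z) / a) - qp * Real.cosh ((ξ + z) / a)) /
            (a * (qm - qp) * Real.sinh (2 * z / a))) * φ ξ)
      (nhdsWithin 0 (Ioi 0))
      (nhds ((qm * φ (-z) - qp * φ z) / (qm - qp))) := by
  have hzz : -z < z := neg_lt_self hz
  have hleft := tendsto_integral_coshKernel_neg_mul hzz hφ.continuousOn
  have hright := tendsto_integral_coshKernel_mul hzz hφ.continuousOn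
  rw [neg_neg] at hleft
  have hlim := (hleft.const_mul (qm / (qm - qp))).sub (hright.const_mul (qp / (qm - qp)))
  rw [show qm / (qm - qp) * φ (-z) - qp / (qm - qp) * φ z
      = (qm * φ (-z) - qp * φ z) / (qm - qp) by ring] at hlim
  refine hlim.congr fun a => ?_
  have hint {f : ℝ → ℝ} (hf : Continuous f) :
      IntervalIntegrable (fun x => f x * φ x) MeasureTheory.volume (-z) z :=
    (hf.mul hφ).intervalIntegrable _ _
  rw [← integral_const_mul, ← integral_const_mul, ← integral_sub
    ((hint (f := fun x => coshKernel (-z) z a (-x))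
      (continuous_coshKernel.comp continuous_neg)).const_mul _)
    ((hint continuous_coshKernel).const_mul _)]
  refine integral_congr fun ξ _ => ?_
  change _ = shapeFunction z qp qm a ξ * φ ξ
  rw [shapeFunction_eq]
  ring

/-- As `a → 0+`, the regularized shape functions `h_a` converge in the sense of
distributions to `q₋/(q₋−q₊) δ(ξ+z) − q₊/(q₋−q₊) δ(ξ−z)`: tested against any
continuous `φ`, `∫_{−z}^{z} h_a φ → (q₋ φ(−z) − q₊ φ(z))/(q₋ − q₊)`. -/
theorem regularized_shape_function_delta_limit
    (z qp qm : ℝ) (hz : 0 < z) (hq : qp ≠ qm)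
    (φ : ℝ → ℝ) (hφ : Continuous φ) :
    Tendsto
      (fun a : ℝ => ∫ ξ in (-z)..z,
        ((qm * Real.cosh ((ξ - z) / a) - qp * Real.cosh ((ξ + z) / a)) /
            (a * (qm - qp) * Real.sinh (2 * z / a))) * φ ξ)
      (nhdsWithin 0 (Ioi 0))
      (nhds ((qm * φ (-z) - qp * φ z) / (qm - qp))) :=
  regularized_shape_function_delta_limit_general z qp qm hz φ hφ
end

section
/- Let q₊ > 0 > q₋ and q₀ < 0, and let q̂ : ℝ → ℝ be the piecewise linear kernel q̂(ξ) = q₀ + q₊ξ for ξ ≥ 0 and q̂(ξ) = q₀ + q₋ξ for ξ < 0. Define z = q₀(q₊ − q₋)/(2 q₊ q₋), α₊ = q₋/(q₋ − q₊), α₋ = −q₊/(q₋ − q₊). Then z > 0, α₊ + α₋ = 1, and α₊ q̂(ξ + z) + α₋ q̂(ξ − z) = 0 for all ξ ∈ (−z, z). Conversely, if z' > 0 and β₊, β₋ ∈ ℝ satisfy β₊ + β₋ = 1 and β₊ q̂(ξ + z') + β₋ q̂(ξ − z') = 0 for all ξ ∈ (−z', z'), then z' = z, β₊ = α₊ and β₋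 = α₋. -/
open Set

/-! On `(-z, z)` the two shifted arguments `ξ + z` and `ξ - z` lie on opposite sides of the kink
of `q̂`, so the two-delta combination is an affine function of `ξ`; it vanishes on the interval
iff both its slope and its constant term vanish. Under the normalization `β₊ + β₋ = 1`, the slope
condition `β₊ q₊ + β₋ q₋ = 0` fixes the weights, and the constant term
`q₀ + (β₊ q₊ - β₋ q₋) z = 0` then fixes `z`. -/

section TwoDelta

variable {q₀ qp qm : ℝ} {qhat : ℝ → ℝ}

theorem two_delta_combination_eq
    (hqhat : ∀ ξ : ℝ, qhat ξ = if 0 ≤ ξ then q₀ + qp * ξ else q₀ + qm * ξ)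
    {z ξ : ℝ} (hξ : ξ ∈ Ioo (-z) z) (βp βm : ℝ) :
    βp * qhat (ξ + z) + βm * qhat (ξ - z) =
      (βp + βm) * q₀ + (βp * qp - βm * qm) * z + (βp * qp + βm * qm) * ξ := by
  have hplus : 0 ≤ ξ + z := by linarith [hξ.1]
  have hminus : ¬ 0 ≤ ξ - z := by linarith [hξ.2]
  rw [hqhat, hqhat, if_pos hplus, if_neg hminus]
  ring

theorem affine_eq_zero_on_Ioo_iff {z : ℝ} (hz : 0 < z) (a b : ℝ) :
    (∀ ξ ∈ Ioo (-z) z, a + b * ξ = 0) ↔ a = 0 ∧ b = 0 := by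
  constructor
  · intro h
    have h₀ := h 0 ⟨by linarith, hz⟩
    have hhalf := h (z / 2) ⟨by linarith, by linarith⟩
    have ha : a = 0 := by simpa using h₀
    refine ⟨ha, ?_⟩
    rw [ha, zero_add, mul_eq_zero] at hhalf
    exact hhalf.resolve_right (by positivity)
  · rintro ⟨rfl, rfl⟩ ξ _
    ring

theorem two_delta_solves_iff
    (hqhat : ∀ ξ : ℝ, qhat ξ = if 0 ≤ ξ then q₀ + qp * ξ else q₀ + qm * ξ)
    {z : ℝ} (hz : 0 < z) (βp βm : ℝ) :
    (∀ ξ ∈ Ioo (-z) z, βp * qhat (ξ + z) + βm * qhat (ξ - z) = 0) ↔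
      (βp + βm) * q₀ + (βp * qp - βm * qm) * z = 0 ∧ βp * qp + βm * qm = 0 := by
  rw [← affine_eq_zero_on_Ioo_iff hz]
  exact forall₂_congr fun ξ hξ => by rw [two_delta_combination_eq hqhat hξ]

theorem two_delta_weights_eq_iff (hne : qm ≠ qp) (βp βm : ℝ) :
    βp + βm = 1 ∧ βp * qp + βm * qm = 0 ↔
      βp = qm / (qm - qp) ∧ βm = -qp / (qm - qp) := by
  have hd : qm - qp ≠ 0 := sub_ne_zero.mpr hne
  constructor
  · rintro ⟨hsum, hslope⟩
    constructor <;> field_simp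
    · linear_combination qm * hsum - hslope
    · linear_combination -qp * hsum + hslope
  · rintro ⟨rfl, rfl⟩
    constructor <;> field_simp <;> ring

theorem two_delta_weights_mul_sub_mul (hne : qm ≠ qp) :
    qm / (qm - qp) * qp - -qp / (qm - qp) * qm = 2 * qp * qm / (qm - qp) := by
  have hd : qm - qp ≠ 0 := sub_ne_zero.mpr hne
  field_simp
  ring

theorem two_delta_offset_eq_zero_iff (hp : qp ≠ 0) (hm : qm ≠ 0) (hne : qm ≠ qp) (z : ℝ) :
    q₀ + 2 * qp * qm / (qm - qp) * z = 0 ↔ z = q₀ * (qp - qm) / (2 * qp * qm) := by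
  have hd : qm - qp ≠ 0 := sub_ne_zero.mpr hne
  rw [eq_div_iff (by positivity), div_mul_eq_mul_div, add_div_eq_mul_add_div _ _ hd,
    div_eq_zero_iff, or_iff_left hd]
  constructor <;> intro h <;> linear_combination h

end TwoDelta

/-- For the piecewise linear kernel with `q₊ > 0 > q₋` and `q₀ < 0`, the
two-delta generalized shape function with weights `α₊ = q₋/(q₋−q₊)`,
`α₋ = −q₊/(q₋−q₊)` and `z = q₀(q₊−q₋)/(2q₊q₋)` solves the approximate
first-kind equation and is the unique normalized such solution. -/
theorem two_delta_solution_exists_unique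
    (q₀ qp qm : ℝ) (hqp : 0 < qp) (hqm : qm < 0) (hq₀ : q₀ < 0)
    (qhat : ℝ → ℝ)
    (hqhat : ∀ ξ : ℝ, qhat ξ = if 0 ≤ ξ then q₀ + qp * ξ else q₀ + qm * ξ)
    (z αp αm : ℝ)
    (hzdef : z = q₀ * (qp - qm) / (2 * qp * qm))
    (hαp : αp = qm / (qm - qp)) (hαm : αm = -qp / (qm - qp)) :
    (0 < z ∧ αp + αm = 1 ∧
      ∀ ξ ∈ Ioo (-z) z, αp * qhat (ξ + z) + αm * qhat (ξ - z) = 0) ∧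
    (∀ z' : ℝ, 0 < z' → ∀ βp βm : ℝ, βp + βm = 1 →
      (∀ ξ ∈ Ioo (-z') z', βp * qhat (ξ + z') + βm * qhat (ξ - z') = 0) →
      z' = z ∧ βp = αp ∧ βm = αm) := by
  have hne : qm ≠ qp := by linarith
  have hz : 0 < z := hzdef ▸ div_pos_of_neg_of_neg (by nlinarith) (by nlinarith)
  obtain ⟨hsum, hslope⟩ := (two_delta_weights_eq_iff hne αp αm).mpr ⟨hαp, hαm⟩
  have hconst (z' : ℝ) : q₀ + (αp * qp - αm * qm) * z' = 0 ↔ z' = z := by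
    rw [hαp, hαm, two_delta_weights_mul_sub_mul hne, hzdef]
    exact two_delta_offset_eq_zero_iff hqp.ne' hqm.ne hne z'
  refine ⟨⟨hz, hsum, ?_⟩, ?_⟩
  · rw [two_delta_solves_iff hqhat hz, hsum, one_mul]
    exact ⟨(hconst z).mpr rfl, hslope⟩
  · intro z' hz' βp βm hβsum hsol
    obtain ⟨hβconst, hβslope⟩ := (two_delta_solves_iff hqhat hz' βp βm).mp hsol
    obtain ⟨rfl, rfl⟩ : βp = αp ∧ βm = αm := by
      rw [hαp, hαm]
      exact (two_delta_weights_eq_iff hne βp βm).mp ⟨hβsum, hβslope⟩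
    rw [hβsum, one_mul, hconst] at hβconst
    exact ⟨hβconst, rfl, rfl⟩
end

section
/- Let q₀, q₊, q₋, q₂ ∈ ℝ with q₊ ≠ q₋, and let q̂ : ℝ → ℝ be the piecewise quadratic kernel q̂(ξ) = q₀ + q₊ξ + q₂ξ² for ξ ≥ 0 and q̂(ξ) = q₀ + q₋ξ + q₂ξ² for ξ < 0. Let z > 0 satisfy q₊ − q₋ + 4q₂z ≠ 0 and the quartic equation (q₊−q₋)q₀ + (4q₂q₀ − 2q₊q₋)z + 4q₂(q₊−q₋)z² + (32q₂²/3)z³ + (32q₂³/(3(q₊−q₋)))z⁴ = 0. Define ζ = −2q₂/(q₊−q₋) and α± = (q₊−q₋+4q₂z)/(2(q₊−q₋)) ∓ (q₊+q₋)/(2(q₊−q₋+4q₂z)). Then α₊ + α₋ + 2ζz = 1, and α₊ q̂(ξ+z) + α₋ q̂(ξ−z) + ζ ∫_{−z}^{z} q̂(ξ−s) ds = 0 for all ξ ∈ (−z, z). -/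
open Set intervalIntegral

/-!
Both delta terms and the integral of the kernel against the constant part are polynomials
in `ξ` on `(−z, z)`, because `ξ + z > 0 > ξ − z` fixes the branch of `q̂` at the delta points
and the integral splits at `0` into two polynomial integrals. The weights make the `ξ²` coefficient vanish
identically, and the remaining coefficients vanish exactly by the quartic equation for `z`.
-/

noncomputable def piecewiseQuadratic (q₀ qp qm q₂ ξ : ℝ) : ℝ :=
  if 0 ≤ ξ then q₀ + qp * ξ + q₂ * ξ ^ 2 else q₀ + qm * ξ + q₂ * ξ ^ 2

section PiecewiseQuadratic

variable (q₀ qp qm q₂ : ℝ)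

theorem piecewiseQuadratic_of_nonneg {ξ : ℝ} (hξ : 0 ≤ ξ) :
    piecewiseQuadratic q₀ qp qm q₂ ξ = q₀ + qp * ξ + q₂ * ξ ^ 2 :=
  if_pos hξ

theorem piecewiseQuadratic_of_nonpos {ξ : ℝ} (hξ : ξ ≤ 0) :
    piecewiseQuadratic q₀ qp qm q₂ ξ = q₀ + qm * ξ + q₂ * ξ ^ 2 := by
  unfold piecewiseQuadratic
  split_ifs with h
  · simp [le_antisymm hξ h]
  · rfl

theorem piecewiseQuadratic_eq_abs (ξ : ℝ) :
    piecewiseQuadratic q₀ qp qm q₂ ξ =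
      q₀ + (qp + qm) / 2 * ξ + (qp - qm) / 2 * |ξ| + q₂ * ξ ^ 2 := by
  rcases le_total 0 ξ with h | h
  · rw [piecewiseQuadratic_of_nonneg _ _ _ _ h, abs_of_nonneg h]; ring
  · rw [piecewiseQuadratic_of_nonpos _ _ _ _ h, abs_of_nonpos h]; ring

theorem continuous_piecewiseQuadratic : Continuous (piecewiseQuadratic q₀ qp qm q₂) := by
  simp only [funext (piecewiseQuadratic_eq_abs q₀ qp qm q₂)]
  fun_prop

theorem integral_quadratic (c a b : ℝ) :
    ∫ t in a..b, (q₀ + c * t + q₂ * t ^ 2) =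
      (q₀ * b + c * b ^ 2 / 2 + q₂ * b ^ 3 / 3) -
        (q₀ * a + c * a ^ 2 / 2 + q₂ * a ^ 3 / 3) := by
  have hcont : Continuous fun t : ℝ => q₀ + c * t + q₂ * t ^ 2 := by fun_prop
  refine integral_eq_sub_of_hasDerivAt
    (f := fun t => q₀ * t + c * t ^ 2 / 2 + q₂ * t ^ 3 / 3) (fun x _ => ?_)
    (hcont.intervalIntegrable a b)
  convert (((hasDerivAt_id' x).const_mul q₀).add
    (((hasDerivAt_pow 2 x).const_mul c).div_const 2)).add
    (((hasDerivAt_pow 3 x).const_mul q₂).div_const 3) using 1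
  · rfl
  · norm_num
    ring

theorem integral_piecewiseQuadratic {a b : ℝ} (ha : a ≤ 0) (hb : 0 ≤ b) :
    ∫ t in a..b, piecewiseQuadratic q₀ qp qm q₂ t =
      (q₀ * b + qp * b ^ 2 / 2 + q₂ * b ^ 3 / 3) -
        (q₀ * a + qm * a ^ 2 / 2 + q₂ * a ^ 3 / 3) := by
  have hint :=
    (continuous_piecewiseQuadratic q₀ qp qm q₂).intervalIntegrable (μ := MeasureTheory.volume)
  rw [← integral_add_adjacent_intervals (hint a 0) (hint 0 b),
    integral_congr (g := fun t => q₀ + qm * t + q₂ * t ^ 2) fun t ht =>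
      piecewiseQuadratic_of_nonpos _ _ _ _ (by rw [uIcc_of_le ha] at ht; exact ht.2),
    integral_congr (g := fun t => q₀ + qp * t + q₂ * t ^ 2) fun t ht =>
      piecewiseQuadratic_of_nonneg _ _ _ _ (by rw [uIcc_of_le hb] at ht; exact ht.1),
    integral_quadratic, integral_quadratic]
  ring

end PiecewiseQuadratic

theorem two_delta_plus_constant_solution_quadratic_kernel_general
    (q₀ qp qm q₂ : ℝ) (hq : qp ≠ qm)
    (qhat : ℝ → ℝ)
    (hqhat : ∀ ξ : ℝ,
      qhat ξ = if 0 ≤ ξ then q₀ + qp * ξ + q₂ * ξ ^ 2 else q₀ + qm * ξ + q₂ * ξ ^ 2)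
    (z : ℝ) (hne : qp - qm + 4 * q₂ * z ≠ 0)
    (hquartic :
      (qp - qm) * q₀ + (4 * q₂ * q₀ - 2 * qp * qm) * z +
        4 * q₂ * (qp - qm) * z ^ 2 + (32 * q₂ ^ 2 / 3) * z ^ 3 +
        (32 * q₂ ^ 3 / (3 * (qp - qm))) * z ^ 4 = 0)
    (ζ αp αm : ℝ)
    (hζ : ζ = -(2 * q₂) / (qp - qm))
    (hαp : αp = (qp - qm + 4 * q₂ * z) / (2 * (qp - qm)) -
        (qp + qm) / (2 * (qp - qm + 4 * q₂ * z)))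
    (hαm : αm = (qp - qm + 4 * q₂ * z) / (2 * (qp - qm)) +
        (qp + qm) / (2 * (qp - qm + 4 * q₂ * z))) :
    αp + αm + 2 * ζ * z = 1 ∧
      ∀ ξ ∈ Ioo (-z) z,
        αp * qhat (ξ + z) + αm * qhat (ξ - z) +
          ζ * ∫ s in (-z)..z, qhat (ξ - s) = 0 := by
  have hqpm : qp - qm ≠ 0 := sub_ne_zero.mpr hq
  have hquartic' : 3 * (qp - qm) ^ 2 * q₀ + 3 * (qp - qm) * (4 * q₂ * q₀ - 2 * qp * qm) * z +
      12 * q₂ * (qp - qm) ^ 2 * z ^ 2 + 32 * q₂ ^ 2 * (qp - qm) * z ^ 3 +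
      32 * q₂ ^ 3 * z ^ 4 = 0 := by
    field_simp at hquartic
    linear_combination hquartic
  obtain rfl : qhat = piecewiseQuadratic q₀ qp qm q₂ := funext hqhat
  subst hζ hαp hαm
  refine ⟨by field_simp; ring, fun ξ ⟨hlo, hhi⟩ => ?_⟩
  rw [integral_comp_sub_left (piecewiseQuadratic q₀ qp qm q₂) ξ, sub_neg_eq_add,
    integral_piecewiseQuadratic _ _ _ _ (by linarith) (by linarith),
    piecewiseQuadratic_of_nonneg _ _ _ _ (by linarith),
    piecewiseQuadratic_of_nonpos _ _ _ _ (by linarith)]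
  field_simp
  linear_combination 2 * hquartic'

/-- For the piecewise quadratic kernel, the generalized shape function consisting
of two delta functions at `±z` with weights `α±` plus a constant regular part
`ζ` is normalized and solves the approximate first-kind integral equation on
`(−z,z)`, provided `z > 0` is a root of the stated quartic equation. -/
theorem two_delta_plus_constant_solution_quadratic_kernel
    (q₀ qp qm q₂ : ℝ) (hq : qp ≠ qm)
    (qhat : ℝ → ℝ)
    (hqhat : ∀ ξ : ℝ,
      qhat ξ = if 0 ≤ ξ then q₀ + qp * ξ + q₂ * ξ ^ 2 else q₀ + qm * ξ + q₂ * ξ ^ 2)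
    (z : ℝ) (hz : 0 < z) (hne : qp - qm + 4 * q₂ * z ≠ 0)
    (hquartic :
      (qp - qm) * q₀ + (4 * q₂ * q₀ - 2 * qp * qm) * z +
        4 * q₂ * (qp - qm) * z ^ 2 + (32 * q₂ ^ 2 / 3) * z ^ 3 +
        (32 * q₂ ^ 3 / (3 * (qp - qm))) * z ^ 4 = 0)
    (ζ αp αm : ℝ)
    (hζ : ζ = -(2 * q₂) / (qp - qm))
    (hαp : αp = (qp - qm + 4 * q₂ * z) / (2 * (qp - qm)) -
        (qp + qm) / (2 * (qp - qm + 4 * q₂ * z)))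
    (hαm : αm = (qp - qm + 4 * q₂ * z) / (2 * (qp - qm)) +
        (qp + qm) / (2 * (qp - qm + 4 * q₂ * z))) :
    αp + αm + 2 * ζ * z = 1 ∧
      ∀ ξ ∈ Ioo (-z) z,
        αp * qhat (ξ + z) + αm * qhat (ξ - z) +
          ζ * ∫ s in (-z)..z, qhat (ξ - s) = 0 :=
  two_delta_plus_constant_solution_quadratic_kernel_general q₀ qp qm q₂ hq qhat hqhat z hne hquartic
    ζ αp αm hζ hαp hαm
end

section
/- Let μ > 0, V > 0, and r > 0 satisfy the dispersion relation μ + 4 sin²(r/2) = V²r², and suppose ℓ := 2 sin r − 2V²r < 0 (so ℓ = L_k(r,V) and r is the single positive real root with waves behind the front). Define Σ = 2μ/(r|ℓ|), and let q₊, q₋ be determined by V²q± = ±μ − Σ(2+μ) − 4μ cos(r)/(r ℓ). Then q₋ < 0; and if moreover Σ < μ/(μ+4), then q₊ > 0. -/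
/-!
The kinetic relation says exactly that `Σ · rℓ = −2μ`, so the cosine term equals `−2Σ cos r`
and, with `1 − cos r = 2 sin²(r/2)`,
`V²q± = ±μ − Σμ − 4Σ sin²(r/2)`.
Since `Σ > 0` this is negative for the minus sign, and for the plus sign it is at least
`μ − Σ(μ + 4)`, which is positive when `Σ < μ/(μ+4)`.
-/

open Real

lemma stress_pos {μ r ℓ : ℝ} (hμ : 0 < μ) (hr : 0 < r) (hℓ : ℓ ≠ 0) :
    0 < 2 * μ / (r * |ℓ|) := by
  have : 0 < |ℓ| := abs_pos.mpr hℓ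
  positivity

lemma stress_mul_eq_neg {μ r ℓ : ℝ} (hr : r ≠ 0) (hℓ : ℓ < 0) :
    2 * μ / (r * |ℓ|) * (r * ℓ) = -(2 * μ) := by
  rw [abs_of_neg hℓ]
  field_simp [hℓ.ne]

lemma cos_eq_one_sub_two_mul_sin_half_sq (x : ℝ) : cos x = 1 - 2 * sin (x / 2) ^ 2 := by
  rw [← cos_two_mul_eq_one_sub, mul_div_cancel₀ x two_ne_zero]

lemma kernel_slope_rhs_eq {μ r ℓ S : ℝ} (hrℓ : r * ℓ ≠ 0) (hS : S * (r * ℓ) = -(2 * μ))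
    (a : ℝ) :
    a - S * (2 + μ) - 4 * μ * cos r / (r * ℓ) = a - S * μ - 4 * S * sin (r / 2) ^ 2 := by
  have hcos : 4 * μ * cos r / (r * ℓ) = -(2 * S * cos r) := by
    rw [div_eq_iff hrℓ]
    linear_combination (2 * cos r) * hS
  rw [hcos, cos_eq_one_sub_two_mul_sin_half_sq r]
  ring

theorem kernel_one_sided_derivative_signs_general
    (μ V r : ℝ) (hμ : 0 < μ) (hr : 0 < r)
    (ℓ : ℝ) (hℓneg : ℓ < 0)
    (S : ℝ) (hS : S = 2 * μ / (r * |ℓ|))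
    (qp qm : ℝ)
    (hqp : V ^ 2 * qp = μ - S * (2 + μ) - 4 * μ * Real.cos r / (r * ℓ))
    (hqm : V ^ 2 * qm = -μ - S * (2 + μ) - 4 * μ * Real.cos r / (r * ℓ)) :
    qm < 0 ∧ (S < μ / (μ + 4) → 0 < qp) := by
  have hrℓ : r * ℓ ≠ 0 := (mul_neg_of_pos_of_neg hr hℓneg).ne
  have hSpos : 0 < S := hS ▸ stress_pos hμ hr hℓneg.ne
  have hSrℓ : S * (r * ℓ) = -(2 * μ) := hS ▸ stress_mul_eq_neg hr.ne' hℓneg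
  rw [kernel_slope_rhs_eq hrℓ hSrℓ] at hqp hqm
  have hsin_nonneg : 0 ≤ sin (r / 2) ^ 2 := sq_nonneg _
  have hsin_le_one : sin (r / 2) ^ 2 ≤ 1 := sin_sq_le_one _
  refine ⟨Left.neg_of_mul_neg_right (by nlinarith) (sq_nonneg V), fun hSlt => ?_⟩
  have hSμ : S * (μ + 4) < μ := (lt_div_iff₀ (by linarith)).mp hSlt
  exact pos_of_mul_pos_right (by nlinarith) (sq_nonneg V)

/-- Above the first resonance, with the single positive real root `r` of the
dispersion relation and `ℓ = L_k(r,V) < 0`, the stress `Σ = 2μ/(r|ℓ|)` and the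
one-sided kernel derivatives `q±` determined by
`V²q± = ±μ − Σ(2+μ) − 4μ cos(r)/(rℓ)` satisfy `q₋ < 0`; and if moreover
`Σ < μ/(μ+4)` then `q₊ > 0`. -/
theorem kernel_one_sided_derivative_signs
    (μ V r : ℝ) (hμ : 0 < μ) (hV : 0 < V) (hr : 0 < r)
    (hdisp : μ + 4 * Real.sin (r / 2) ^ 2 = V ^ 2 * r ^ 2)
    (ℓ : ℝ) (hℓdef : ℓ = 2 * Real.sin r - 2 * V ^ 2 * r) (hℓneg : ℓ < 0)
    (S : ℝ) (hS : S = 2 * μ / (r * |ℓ|))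
    (qp qm : ℝ)
    (hqp : V ^ 2 * qp = μ - S * (2 + μ) - 4 * μ * Real.cos r / (r * ℓ))
    (hqm : V ^ 2 * qm = -μ - S * (2 + μ) - 4 * μ * Real.cos r / (r * ℓ)) :
    qm < 0 ∧ (S < μ / (μ + 4) → 0 < qp) :=
  kernel_one_sided_derivative_signs_general μ V r hμ hr ℓ hℓneg S hS qp qm hqp hqm
end
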